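/- arXiv:1306.1111 — 8 statements merged into one kernel-verified Lean document; each statement's English description precedes it below -/
import Mathlib

section
/- Let Y be an n×n complex matrix and X any n×n complex matrix, and let 𝟙 denote the column vector in ℂⁿ all of whose entries equal 1. If XY − YX = I − 𝟙𝟙ᵗ (where 𝟙𝟙ᵗ is the rank-one all-ones matrix), then for every k ≥ 0 one has 𝟙ᵗ Yᵏ 𝟙 = tr(Yᵏ). -/
/-!
Write `J = 𝟙𝟙ᵗ`. Then `𝟙ᵗ A 𝟙 = tr (A J)` for every matrix `A`, and by the hypothesis
`J = I - [X, Y]`. Since `Yᵏ` commutes with `Y`, cyclicity of the trace gives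
`tr (Yᵏ [X, Y]) = 0`, hence `𝟙ᵗ Yᵏ 𝟙 = tr (Yᵏ J) = tr (Yᵏ)`.
-/

open Matrix

namespace Matrix

variable {n R : Type*} [Fintype n]

theorem dotProduct_mulVec_eq_trace_mul_vecMulVec [CommSemiring R]
    (A : Matrix n n R) (v w : n → R) :
    v ⬝ᵥ (A *ᵥ w) = trace (A * vecMulVec w v) := by
  rw [dotProduct_comm, mul_vecMulVec, trace_vecMulVec]

theorem trace_mul_commutator_eq_zero [CommRing R] {A Y : Matrix n n R}
    (hAY : Commute A Y) (X : Matrix n n R) :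
    trace (A * (X * Y - Y * X)) = 0 := by
  rw [mul_sub, trace_sub, ← Matrix.mul_assoc, trace_mul_cycle, ← Matrix.mul_assoc,
    ← hAY.eq, sub_self]

end Matrix

/-- If `X*Y - Y*X = 1 - 𝟙𝟙ᵗ` then `𝟙ᵗ Yᵏ 𝟙 = tr (Yᵏ)` for all `k ≥ 0`. -/
theorem ones_quadratic_form_eq_trace_pow
    (n : ℕ) (X Y : Matrix (Fin n) (Fin n) ℂ)
    (hcomm : X * Y - Y * X = 1 - Matrix.of (fun _ _ => (1 : ℂ))) :
    ∀ k : ℕ,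
      dotProduct (fun _ => (1 : ℂ)) ((Y ^ k).mulVec (fun _ => (1 : ℂ)))
        = (Y ^ k).trace := by
  intro k
  have hJ : vecMulVec (fun _ => (1 : ℂ)) (fun _ => 1) = 1 - (X * Y - Y * X) := by
    rw [hcomm, sub_sub_cancel]
    ext
    simp [vecMulVec_apply]
  rw [dotProduct_mulVec_eq_trace_mul_vecMulVec, hJ, mul_sub, trace_sub, Matrix.mul_one,
    trace_mul_commutator_eq_zero ((Commute.refl Y).pow_left k), sub_zero]
end

section
/- Let X, Y be n×n complex matrices satisfying XY − YX = I − 𝟙𝟙ᵗ, where 𝟙 is the all-ones column vector. Then for all x, z ∈ ℂ, det((xI − X)(zI − Y) − I) = det(xI − X)·det(zI − Y)·(1 − 𝟙ᵗ (xI − X)⁻¹ (zI − Y)⁻¹ 𝟙), whenever xI − X and zI − Y are invertible. -/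
/-! Shifting `X` and `Y` by scalars does not change their commutator, so
`(x - X)(z - Y) - 1 = (z - Y)(x - X) - 𝟙𝟙ᵗ`: a rank-one perturbation of the invertible matrix
`(z - Y)(x - X)`, whose determinant the matrix determinant lemma computes. -/

open Matrix

namespace Matrix

variable {m α : Type*} [Fintype m] [DecidableEq m] [CommRing α]

theorem det_sub_vecMulVec {A : Matrix m m α} (hA : IsUnit A.det) (u v : m → α) :
    (A - vecMulVec u v).det = A.det * (1 - v ⬝ᵥ A⁻¹ *ᵥ u) := by
  rw [sub_eq_add_neg, ← neg_vecMulVec, vecMulVec_eq Unit, det_add_replicateCol_mul_replicateRow hA,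
    Matrix.mul_assoc, ← replicateCol_mulVec, det_unique (1 + _), add_apply, one_apply_eq,
    replicateRow_mul_replicateCol_apply, mulVec_neg, dotProduct_neg, sub_eq_add_neg]

end Matrix

theorem commutator_smul_one_sub_smul_one_sub {R A : Type*} [CommSemiring R] [Ring A] [Algebra R A]
    (x z : R) (a b : A) :
    (x • 1 - a) * (z • 1 - b) - (z • 1 - b) * (x • 1 - a) = a * b - b * a := by
  simp only [sub_mul, mul_sub, smul_mul_assoc, mul_smul_comm, one_mul, mul_one, smul_sub, smul_smul,
    mul_comm x z]
  abel

/-- Under the Calogero–Moser commutation relation `X*Y - Y*X = 1 - 𝟙𝟙ᵗ`,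
`det ((x - X)(z - Y) - 1) = det (x - X) det (z - Y) (1 - 𝟙ᵗ (x-X)⁻¹ (z-Y)⁻¹ 𝟙)`
whenever `x - X` and `z - Y` are invertible. -/
theorem det_factorization_CM
    (n : ℕ) (X Y : Matrix (Fin n) (Fin n) ℂ)
    (hcomm : X * Y - Y * X = 1 - Matrix.of (fun _ _ => (1 : ℂ)))
    (x z : ℂ)
    (hx : IsUnit (x • (1 : Matrix (Fin n) (Fin n) ℂ) - X))
    (hz : IsUnit (z • (1 : Matrix (Fin n) (Fin n) ℂ) - Y)) :
    ((x • (1 : Matrix (Fin n) (Fin n) ℂ) - X) *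
        (z • (1 : Matrix (Fin n) (Fin n) ℂ) - Y) - 1).det
      = (x • (1 : Matrix (Fin n) (Fin n) ℂ) - X).det *
        (z • (1 : Matrix (Fin n) (Fin n) ℂ) - Y).det *
        (1 - dotProduct (fun _ => (1 : ℂ))
          (((x • (1 : Matrix (Fin n) (Fin n) ℂ) - X)⁻¹ *
            (z • (1 : Matrix (Fin n) (Fin n) ℂ) - Y)⁻¹).mulVec (fun _ => (1 : ℂ)))) := by
  set A := x • (1 : Matrix (Fin n) (Fin n) ℂ) - X
  set B := z • (1 : Matrix (Fin n) (Fin n) ℂ) - Y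
  have hJ : (of fun _ _ => 1 : Matrix (Fin n) (Fin n) ℂ) = vecMulVec (fun _ => 1) (fun _ => 1) := by
    ext; simp [vecMulVec]
  have hAB : A * B - 1 = B * A - vecMulVec (fun _ => 1) (fun _ => 1) := by
    rw [sub_eq_sub_iff_sub_eq_sub, commutator_smul_one_sub_smul_one_sub, hcomm, hJ]
  have hBA : IsUnit (B * A).det := (isUnit_iff_isUnit_det _).mp (hz.mul hx)
  rw [hAB, det_sub_vecMulVec hBA, Matrix.mul_inv_rev, det_mul, mul_comm B.det]
end

section
/- Let x₁,…,xₙ be distinct complex numbers, let Y be the Calogero–Moser Lax matrix Y_{ik} = −p_i δ_{ik} − (1−δ_{ik})/(x_i − x_k), and let T be the matrix T_{ik} = −δ_{ik} ∑_{j≠i} 2/(x_i − x_j)² + 2(1−δ_{ik})/(x_i − x_k)². If the x_i and p_i depend smoothly on t with ẋ_i = 2 p_i and ṗ_i = −4 ∑_{j≠i} 1/(x_i − x_j)³, then Ẏ = [T, Y]. -/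
/-
Both sides are computed entrywise. On the diagonal, ẏᵢᵢ = -ṗᵢ, and each index j ≠ i
contributes 4/(xᵢ - xⱼ)³ to [T, Y]ᵢᵢ. Off the diagonal, ẏᵢₖ = 2(pᵢ - pₖ)/(xᵢ - xₖ)² by the
chain rule; in [T, Y]ᵢₖ the indices j = i, k give exactly this plus (Sᵢ - Sₖ)/(xᵢ - xₖ) with
Sᵢ = ∑_{j≠i} 2/(xᵢ - xⱼ)², and the three-point identity `cm_three_point_identity` turns
every other index into a term cancelling the corresponding part of that difference.
-/

open Matrix Finset

/-- The Lax matrix of the rational Calogero–Moser model. -/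
noncomputable def CMLax (n : ℕ) (x p : Fin n → ℂ) : Matrix (Fin n) (Fin n) ℂ :=
  Matrix.of fun i k => if i = k then -p i else -(x i - x k)⁻¹

/-- The auxiliary matrix `T` of the Calogero–Moser Lax pair. -/
noncomputable def CMT (n : ℕ) (x : Fin n → ℂ) : Matrix (Fin n) (Fin n) ℂ :=
  Matrix.of fun i k =>
    if i = k then -∑ j ∈ Finset.univ.erase i, 2 / (x i - x j) ^ 2
    else 2 / (x i - x k) ^ 2

lemma cm_three_point_identity {K : Type*} [Field K] {u v w : K}
    (huv : u ≠ v) (hvw : v ≠ w) (huw : u ≠ w) :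
    2 / (u - v) ^ 2 * -(v - w)⁻¹ - -(u - v)⁻¹ * (2 / (v - w) ^ 2)
      = (u - w)⁻¹ * (2 / (w - v) ^ 2 - 2 / (u - v) ^ 2) := by
  have huv' := sub_ne_zero.2 huv
  have hvw' := sub_ne_zero.2 hvw
  have huw' := sub_ne_zero.2 huw
  rw [show w - v = -(v - w) by ring, neg_sq]
  field_simp
  ring

section Entries

variable {n : ℕ} (x p : Fin n → ℂ)

@[simp]
lemma CMLax_apply_self (i : Fin n) : CMLax n x p i i = -p i := by
  simp [CMLax]

lemma CMLax_apply_of_ne {i k : Fin n} (hik : i ≠ k) :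
    CMLax n x p i k = -(x i - x k)⁻¹ := by
  simp [CMLax, hik]

@[simp]
lemma CMT_apply_self (i : Fin n) :
    CMT n x i i = -∑ j ∈ univ.erase i, 2 / (x i - x j) ^ 2 := by
  simp [CMT]

lemma CMT_apply_of_ne {i k : Fin n} (hik : i ≠ k) : CMT n x i k = 2 / (x i - x k) ^ 2 := by
  simp [CMT, hik]

end Entries

section Commutator

variable {n : ℕ} {x : Fin n → ℂ} (p : Fin n → ℂ)

lemma CM_commutator_apply_self (hx : Function.Injective x) (i : Fin n) :
    (CMT n x * CMLax n x p - CMLax n x p * CMT n x) i i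
      = 4 * ∑ j ∈ univ.erase i, ((x i - x j) ^ 3)⁻¹ := by
  rw [Matrix.sub_apply, mul_apply, mul_apply, ← sum_sub_distrib,
    ← add_sum_erase _ _ (mem_univ i), mul_comm (CMT n x i i), sub_self, zero_add, mul_sum]
  refine sum_congr rfl fun j hj => ?_
  have hji := ne_of_mem_erase hj
  have hd := sub_ne_zero.2 (hx.ne hji.symm)
  rw [CMT_apply_of_ne _ hji.symm, CMT_apply_of_ne _ hji, CMLax_apply_of_ne _ _ hji,
    CMLax_apply_of_ne _ _ hji.symm, show x j - x i = -(x i - x j) by ring]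
  field_simp
  ring

lemma CM_commutator_apply_of_ne (hx : Function.Injective x) {i k : Fin n} (hik : i ≠ k) :
    (CMT n x * CMLax n x p - CMLax n x p * CMT n x) i k
      = 2 * (p i - p k) / (x i - x k) ^ 2 := by
  set R := (univ.erase i).erase k
  have hkR : k ∈ univ.erase i := mem_erase.2 ⟨hik.symm, mem_univ k⟩
  have hSi : ∑ j ∈ univ.erase i, 2 / (x i - x j) ^ 2
      = 2 / (x i - x k) ^ 2 + ∑ j ∈ R, 2 / (x i - x j) ^ 2 :=
    (add_sum_erase _ _ hkR).symm
  have hSk : ∑ j ∈ univ.erase k, 2 / (x k - x j) ^ 2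
      = 2 / (x k - x i) ^ 2 + ∑ j ∈ R, 2 / (x k - x j) ^ 2 := by
    rw [show R = (univ.erase k).erase i from erase_right_comm]
    exact (add_sum_erase _ _ (mem_erase.2 ⟨hik, mem_univ i⟩)).symm
  have hrest :
      ∑ j ∈ R, (CMT n x i j * CMLax n x p j k - CMLax n x p i j * CMT n x j k)
        = (x i - x k)⁻¹ * (∑ j ∈ R, 2 / (x k - x j) ^ 2 - ∑ j ∈ R, 2 / (x i - x j) ^ 2) := by
    rw [← sum_sub_distrib, mul_sum]
    refine sum_congr rfl fun j hj => ?_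
    have hjk := ne_of_mem_erase hj
    have hji := ne_of_mem_erase (mem_of_mem_erase hj)
    rw [CMT_apply_of_ne _ hji.symm, CMT_apply_of_ne _ hjk, CMLax_apply_of_ne _ _ hjk,
      CMLax_apply_of_ne _ _ hji.symm]
    exact cm_three_point_identity (hx.ne hji.symm) (hx.ne hjk) (hx.ne hik)
  rw [Matrix.sub_apply, mul_apply, mul_apply, ← sum_sub_distrib,
    ← add_sum_erase _ _ (mem_univ i), ← add_sum_erase _ _ hkR, hrest]
  simp only [CMLax_apply_self, CMT_apply_self, CMLax_apply_of_ne _ _ hik, CMT_apply_of_ne _ hik,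
    hSi, hSk]
  have hd := sub_ne_zero.2 (hx.ne hik)
  rw [show x k - x i = -(x i - x k) by ring, neg_sq]
  field_simp
  ring

end Commutator

/-- If `ẋᵢ = 2pᵢ` and `ṗᵢ = -4 ∑_{j≠i} (xᵢ-xⱼ)⁻³`, then the Lax equation
`Ẏ = [T, Y]` holds (entrywise). -/
theorem CM_Lax_equation
    (n : ℕ) (x p : ℝ → Fin n → ℂ) (t₀ : ℝ)
    (hsep : ∀ t, ∀ i j : Fin n, i ≠ j → x t i ≠ x t j)
    (hx : ∀ i, HasDerivAt (fun t => x t i) (2 * p t₀ i) t₀)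
    (hp : ∀ i, HasDerivAt (fun t => p t i)
      (-4 * ∑ j ∈ Finset.univ.erase i, ((x t₀ i - x t₀ j) ^ 3)⁻¹) t₀) :
    ∀ i k : Fin n,
      HasDerivAt (fun t => CMLax n (x t) (p t) i k)
        ((CMT n (x t₀) * CMLax n (x t₀) (p t₀)
          - CMLax n (x t₀) (p t₀) * CMT n (x t₀)) i k) t₀ := by
  have hinj : Function.Injective (x t₀) := fun i j h => by_contra fun hij => hsep t₀ i j hij h
  intro i k
  rcases eq_or_ne i k with rfl | hik
  · simp only [CMLax_apply_self]
    rw [CM_commutator_apply_self _ hinj]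
    exact (hp i).neg.congr_deriv (by ring)
  · simp only [CMLax_apply_of_ne _ _ hik]
    rw [CM_commutator_apply_of_ne _ hinj hik]
    have hd : HasDerivAt (fun t => x t i - x t k) (2 * p t₀ i - 2 * p t₀ k) t₀ :=
      (hx i).sub (hx k)
    exact (hd.inv (sub_ne_zero.2 (hinj.ne hik))).neg.congr_deriv (by ring)
end

section
/- Let x₁,…,xₙ be distinct complex numbers, k ∈ ℂ, and Y the matrix with Y_{ii} = k + ∑_{j≠i} 1/(x_i − x_j) and Y_{ik} = −1/(x_i − x_k) for i ≠ k. Then det(zI − Y) = (z − k)ⁿ, i.e. Y has k as its only eigenvalue with algebraic multiplicity n. -/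
/-!
Write `Y = k + L`. On the vector of values of a function `f` at the points, `L` returns the
divided differences `∑_{j ≠ i} (f(x_i) - f(x_j)) / (x_i - x_j)`, which lower the degree of a
polynomial: `x^m` goes to `∑_{c < m} p_{m-1-c} x^c - m x^{m-1}`, with `p_s` the power sums of
the points. In the basis of Vandermonde columns `L` is therefore strictly upper triangular, so
its characteristic polynomial is `Xⁿ` and `det(z - Y) = det((z - k) - L) = (z - k)ⁿ`.
-/

open Matrix Finset

section

variable {K : Type*} [Field K] {n : ℕ}

theorem inv_sub_mul_pow_sub_pow {a b : K} (hab : a ≠ b) (m : ℕ) :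
    (a - b)⁻¹ * (a ^ m - b ^ m) = ∑ c ∈ range m, a ^ c * b ^ (m - 1 - c) := by
  rw [← geom_sum₂_mul, mul_comm, mul_inv_cancel_right₀ (sub_ne_zero.2 hab)]

def cmLax (x : Fin n → K) : Matrix (Fin n) (Fin n) K :=
  Matrix.of fun i j => if i = j then ∑ l ∈ univ.erase i, (x i - x l)⁻¹ else -(x i - x j)⁻¹

theorem cmLax_mulVec_apply (x : Fin n → K) (v : Fin n → K) (i : Fin n) :
    (cmLax x *ᵥ v) i = ∑ j ∈ univ.erase i, (x i - x j)⁻¹ * (v i - v j) := by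
  have hoff : ∀ j ∈ univ.erase i, cmLax x i j * v j = -((x i - x j)⁻¹ * v j) := fun j hj => by
    simp [cmLax, (ne_of_mem_erase hj).symm]
  rw [mulVec, dotProduct, ← add_sum_erase _ _ (mem_univ i), sum_congr rfl hoff, sum_neg_distrib,
    ← sub_eq_add_neg]
  simp only [cmLax, of_apply, if_true, sum_mul, sum_sub_distrib, mul_sub]

def cmLaxMonomial (x : Fin n → K) : Matrix (Fin n) (Fin n) K :=
  Matrix.of fun a m =>
    if (a : ℕ) < m then ∑ j, x j ^ ((m : ℕ) - 1 - a) - if (a : ℕ) + 1 = m then (m : K) else 0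
    else 0

theorem cmLax_mulVec_pow {x : Fin n → K} (hx : Function.Injective x) (m : ℕ) (i : Fin n) :
    (cmLax x *ᵥ fun j => x j ^ m) i
      = ∑ c ∈ range m, x i ^ c * ∑ j, x j ^ (m - 1 - c) - m * x i ^ (m - 1) := by
  have hdiv : ∀ j ∈ univ.erase i, (x i - x j)⁻¹ * (x i ^ m - x j ^ m)
      = ∑ c ∈ range m, x i ^ c * x j ^ (m - 1 - c) := fun j hj =>
    inv_sub_mul_pow_sub_pow (hx.ne (ne_of_mem_erase hj).symm) m
  have hpow : ∀ c ∈ range m, x i ^ c * x i ^ (m - 1 - c) = x i ^ (m - 1) := fun c hc => by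
    rw [← pow_add, Nat.add_sub_cancel' (Nat.le_sub_one_of_lt (mem_range.1 hc))]
  rw [cmLax_mulVec_apply, sum_congr rfl hdiv, sum_comm]
  simp_rw [← mul_sum, sum_erase_eq_sub (mem_univ i), mul_sub]
  rw [sum_sub_distrib, sum_congr rfl hpow, sum_const, card_range, nsmul_eq_mul]

theorem vandermonde_mul_cmLaxMonomial_apply (x : Fin n → K) (i m : Fin n) :
    (vandermonde x * cmLaxMonomial x) i m
      = ∑ c ∈ range m, x i ^ c * ∑ j, x j ^ ((m : ℕ) - 1 - c) - m * x i ^ ((m : ℕ) - 1) := by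
  have hsum : (vandermonde x * cmLaxMonomial x) i m = ∑ c ∈ range m,
      x i ^ c * (∑ j, x j ^ ((m : ℕ) - 1 - c) - if c + 1 = m then (m : K) else 0) := by
    rw [mul_apply]
    simp only [vandermonde_apply, cmLaxMonomial, of_apply, mul_ite, mul_zero]
    rw [Fin.sum_univ_eq_sum_range (fun c => if c < m then x i ^ c * (∑ j, x j ^ ((m : ℕ) - 1 - c)
      - if c + 1 = m then (m : K) else 0) else 0), ← sum_subset (range_subset_range.2 m.isLt.le)]
    · exact sum_congr rfl fun c hc => if_pos (mem_range.1 hc)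
    · exact fun c _ hc => if_neg (mem_range.not.1 hc)
  have hsuper : ∑ c ∈ range m, x i ^ c * (if c + 1 = m then (m : K) else 0)
      = m * x i ^ ((m : ℕ) - 1) := by
    obtain ⟨m, hm⟩ := m
    cases m with
    | zero => simp
    | succ m => simp [mul_comm]
  rw [hsum, ← hsuper, ← sum_sub_distrib]
  simp_rw [mul_sub]

theorem cmLax_mul_vandermonde {x : Fin n → K} (hx : Function.Injective x) :
    cmLax x * vandermonde x = vandermonde x * cmLaxMonomial x := by
  ext i m
  rw [vandermonde_mul_cmLaxMonomial_apply, ← cmLax_mulVec_pow hx, mulVec, mul_apply, dotProduct]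
  rfl

theorem cmLaxMonomial_isUpperTriangular (x : Fin n → K) : (cmLaxMonomial x).IsUpperTriangular :=
  fun a m h => by simp only [cmLaxMonomial, of_apply]; exact if_neg (lt_asymm h)

theorem charpoly_cmLaxMonomial (x : Fin n → K) :
    (cmLaxMonomial x).charpoly = Polynomial.X ^ n := by
  rw [charpoly_of_isUpperTriangular _ (cmLaxMonomial_isUpperTriangular x)]
  simp [cmLaxMonomial]

theorem charpoly_cmLax {x : Fin n → K} (hx : Function.Injective x) :
    (cmLax x).charpoly = Polynomial.X ^ n := by
  have hdet : IsUnit (vandermonde x).det :=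
    isUnit_iff_ne_zero.2 (det_vandermonde_ne_zero_iff.2 hx)
  have hV : IsUnit (vandermonde x) := (isUnit_iff_isUnit_det _).2 hdet
  have : cmLax x = hV.unit.val * cmLaxMonomial x * hV.unit.val⁻¹ := by
    rw [IsUnit.unit_spec, ← cmLax_mul_vandermonde hx, mul_nonsing_inv_cancel_right _ _ hdet]
  rw [this, charpoly_units_conj, charpoly_cmLaxMonomial]

end

/-- The one-eigenvalue Calogero–Moser Lax matrix has characteristic polynomial
`(z - k)ⁿ`. -/
theorem CM_Lax_char_poly
    (n : ℕ) (x : Fin n → ℂ) (hx : Function.Injective x) (k : ℂ)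
    (Y : Matrix (Fin n) (Fin n) ℂ)
    (hY : Y = Matrix.of fun i j =>
      if i = j then k + ∑ l ∈ Finset.univ.erase i, (x i - x l)⁻¹
      else -(x i - x j)⁻¹) :
    ∀ z : ℂ, (z • (1 : Matrix (Fin n) (Fin n) ℂ) - Y).det = (z - k) ^ n := by
  intro z
  have hYk : Y = scalar (Fin n) k + cmLax x := by
    ext i j
    by_cases hij : i = j <;> simp [hY, cmLax, hij]
  have hz : z • (1 : Matrix (Fin n) (Fin n) ℂ) - Y = scalar (Fin n) (z - k) - cmLax x := by
    simp only [hYk, map_sub, scalar_apply, smul_one_eq_diagonal, sub_add_eq_sub_sub]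
  rw [hz, ← eval_charpoly, charpoly_cmLax hx, Polynomial.eval_pow, Polynomial.eval_X]
end

section
/- Let g be an N×N complex matrix with eigenvalues p₁,…,p_N, and for a partition λ = (λ₁ ≥ … ≥ λ_N ≥ 0) define the character χ_λ(g) = det(p_j^{λ_i + N − i}) / det(p_j^{N−i}) (for pairwise distinct eigenvalues). Then χ_λ(g − I) = ∑_{μ ⊆ λ} c_{λμ} χ_μ(g), where c_{λμ} = (−1)^{|λ|−|μ|} det_{1≤i,j≤N} binom(λ_i + N − i, μ_j + N − j) and |λ| = ∑ᵢ λᵢ. -/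
open Matrix Finset

/-- Weyl character formula: the Schur polynomial `χ_λ` evaluated at the
eigenvalues `p₁, …, p_N`. -/
noncomputable def weylChar (N : ℕ) (p : Fin N → ℂ) (l : Fin N → ℕ) : ℂ :=
  (Matrix.of fun i j : Fin N => p j ^ (l i + (N - 1 - i.val))).det /
    (Matrix.of fun i j : Fin N => p j ^ (N - 1 - i.val)).det

/-!
Expanding `(x - 1) ^ a = ∑_b (-1) ^ (a + b) (a choose b) x ^ b` factors the numerator matrix
`((p_j - 1) ^ (λ_i + N - 1 - i))` as a signed binomial matrix times the tall matrix `(p_j ^ b)`,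
and Cauchy–Binet expands its determinant over strictly decreasing exponent sequences
`b = μ + (N - 1, …, 1, 0)`, i.e. over partitions `μ`. As `λ + (N - 1, …, 0)` and `b` both
decrease, the binomial minor has a zero block, hence vanishes, unless `μ ⊆ λ`. The denominator
is a Vandermonde determinant, which is unchanged by `p ↦ p - 1`.
-/

theorem Fin.exists_strictAnti_comp_perm {β : Type*} [LinearOrder β] {N : ℕ} {r : Fin N → β}
    (hr : Function.Injective r) :
    ∃ b : Fin N → β, StrictAnti b ∧ ∃ σ : Equiv.Perm (Fin N), b ∘ σ = r := by
  set π : Equiv.Perm (Fin N) := Fin.revPerm.trans (Tuple.sort r)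
  have hsorted : StrictMono (r ∘ Tuple.sort r) :=
    (Tuple.monotone_sort r).strictMono_of_injective (hr.comp (Tuple.sort r).injective)
  refine ⟨r ∘ π, hsorted.comp_strictAnti Fin.rev_strictAnti, π.symm, ?_⟩
  ext i
  simp

theorem Fin.strictAnti_comp_perm_injective {β : Type*} [LinearOrder β] {N : ℕ}
    {b b' : Fin N → β} (hb : StrictAnti b) (hb' : StrictAnti b') {σ σ' : Equiv.Perm (Fin N)}
    (h : b ∘ σ = b' ∘ σ') : b = b' ∧ σ = σ' := by
  have hbb : b = b' := by
    rw [← hb.range_inj hb', ← σ.surjective.range_comp, h, σ'.surjective.range_comp]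
  subst hbb
  exact ⟨rfl, Equiv.ext fun i => hb.injective (congrFun h i)⟩

open Classical in
theorem Fin.sum_eq_sum_strictAnti_sum_perm {β M : Type*} [LinearOrder β] [Fintype β]
    [AddCommMonoid M] {N : ℕ} (F : (Fin N → β) → M)
    (hF : ∀ r, ¬ Function.Injective r → F r = 0) :
    ∑ r, F r = ∑ b ∈ univ.filter (StrictAnti : (Fin N → β) → Prop),
      ∑ σ : Equiv.Perm (Fin N), F (b ∘ σ) := by
  rw [← sum_product',
    ← sum_image (f := F) (g := fun x : (Fin N → β) × Equiv.Perm (Fin N) => x.1 ∘ x.2)]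
  · refine (sum_subset (subset_univ _) fun r _ hr => ?_).symm
    by_contra hne
    obtain ⟨b, hb, σ, rfl⟩ := Fin.exists_strictAnti_comp_perm (not_imp_comm.mp (hF r) hne)
    exact hr (mem_image.mpr ⟨(b, σ), by simpa using hb, rfl⟩)
  · rintro ⟨b, σ⟩ hbσ ⟨b', σ'⟩ hbσ' h
    simp only [coe_product, coe_filter, Set.mem_prod, Set.mem_ofPred_eq] at hbσ hbσ'
    obtain ⟨rfl, rfl⟩ := Fin.strictAnti_comp_perm_injective hbσ.1.2 hbσ'.1.2 h
    rfl

theorem Fin.exists_lt_apply_perm_of_antitone {α : Type*} [LinearOrder α] {N : ℕ}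
    {a b : Fin N → α} (ha : Antitone a) (hb : Antitone b) {k : Fin N} (hk : a k < b k)
    (σ : Equiv.Perm (Fin N)) : ∃ i, a (σ i) < b i := by
  by_contra! h
  have hmaps : ∀ i ∈ Iic k, σ i ∈ Iio k := fun i hi => by
    rw [mem_Iic] at hi
    rw [mem_Iio]
    by_contra! hki
    exact (hk.trans_le ((hb hi).trans (h i))).not_ge (ha hki)
  have hcard := card_le_card_of_injOn σ hmaps σ.injective.injOn
  rw [Fin.card_Iic, Fin.card_Iio] at hcard
  omega

theorem Antitone.strictAnti_add_staircase {N : ℕ} {μ : Fin N → ℕ} (hμ : Antitone μ) :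
    StrictAnti fun i : Fin N => μ i + (N - 1 - i) := fun i j hij => by
  have := hμ hij.le
  have := j.isLt
  have : (i : ℕ) < j := hij
  dsimp only
  omega

theorem StrictAnti.exists_antitone_add_staircase {N : ℕ} {b : Fin N → ℕ} (hb : StrictAnti b) :
    ∃ μ : Fin N → ℕ, Antitone μ ∧ ∀ i, b i = μ i + (N - 1 - i) := by
  have hgap : Antitone fun i : Fin N => b i + i := by
    cases N with
    | zero => exact fun i => i.elim0
    | succ n =>
      refine Fin.antitone_iff_succ_le.mpr fun i => ?_
      have := hb (Fin.castSucc_lt_succ (i := i))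
      simp only [Fin.val_succ, Fin.val_castSucc]
      omega
  have hstair (i : Fin N) : N - 1 - i ≤ b i := by
    have : b ⟨N - 1, by have := i.isLt; omega⟩ + (N - 1) ≤ b i + i :=
      hgap (Fin.mk_le_mk.mpr (show (i : ℕ) ≤ N - 1 by omega))
    omega
  refine ⟨fun i => b i - (N - 1 - i), fun i j hij => ?_, fun i => ?_⟩
  · have : b j + j ≤ b i + i := hgap hij
    have := hstair i
    have := hstair j
    dsimp only
    omega
  · have := hstair i
    dsimp only
    omega

theorem sub_one_pow_eq_sum_fin {R : Type*} [CommRing R] (x : R) {a M : ℕ} (h : a ≤ M) :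
    (x - 1) ^ a = ∑ b : Fin (M + 1), (-1) ^ ((b : ℕ) + a) * a.choose b * x ^ (b : ℕ) := by
  rw [sub_pow, Fin.sum_univ_eq_sum_range (fun b => (-1 : R) ^ (b + a) * a.choose b * x ^ b)]
  refine sum_subset_zero_on_sdiff (range_subset_range.mpr (by omega)) ?_ ?_
  · intro b hb
    rw [mem_sdiff, mem_range, mem_range] at hb
    rw [Nat.choose_eq_zero_of_lt (by omega), Nat.cast_zero, mul_zero, zero_mul]
  · intro b _
    rw [one_pow, mul_one, mul_right_comm]

namespace Matrix

variable {R : Type*} [CommRing R] {N : ℕ}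

theorem det_mul_eq_sum_prod_mul_det_submatrix {β : Type*} [Fintype β]
    (C : Matrix (Fin N) β R) (V : Matrix β (Fin N) R) :
    (C * V).det = ∑ r : Fin N → β, (∏ i, C i (r i)) * (V.submatrix r id).det := by
  have hrows : (C * V).det = detRowAlternating.toMultilinearMap fun i => ∑ b, C i b • V b := by
    congr 1
    ext i j
    simp [mul_apply]
  rw [hrows, MultilinearMap.map_sum]
  refine sum_congr rfl fun r _ => ?_
  rw [MultilinearMap.map_smul_univ, smul_eq_mul]
  rfl

open Classical in
theorem det_mul_eq_sum_strictAnti {β : Type*} [LinearOrder β] [Fintype β]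
    (C : Matrix (Fin N) β R) (V : Matrix β (Fin N) R) :
    (C * V).det = ∑ b ∈ univ.filter (StrictAnti : (Fin N → β) → Prop),
      (C.submatrix id b).det * (V.submatrix b id).det := by
  rw [det_mul_eq_sum_prod_mul_det_submatrix, Fin.sum_eq_sum_strictAnti_sum_perm]
  · refine sum_congr rfl fun b _ => ?_
    rw [← det_transpose (C.submatrix id b), det_apply', sum_mul]
    refine sum_congr rfl fun σ _ => ?_
    rw [show V.submatrix (b ∘ σ) id = (V.submatrix b id).submatrix σ id from rfl, det_permute]
    simp only [Function.comp_apply, transpose_apply, submatrix_apply, id_eq]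
    ring
  · intro r hr
    obtain ⟨i, j, hij, hne⟩ := Function.not_injective_iff.mp hr
    rw [det_zero_of_row_eq hne (by ext; simp [hij]), mul_zero]

theorem det_eq_zero_of_antitone {α : Type*} [LinearOrder α]
    {a b : Fin N → α} (ha : Antitone a) (hb : Antitone b) (M : Matrix (Fin N) (Fin N) R)
    (hM : ∀ i j, a i < b j → M i j = 0) {k : Fin N} (hk : a k < b k) : M.det = 0 := by
  rw [det_apply]
  refine sum_eq_zero fun σ _ => ?_
  obtain ⟨i, hi⟩ := Fin.exists_lt_apply_perm_of_antitone ha hb hk σ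
  exact smul_eq_zero_of_right _ (prod_eq_zero (mem_univ i) (hM _ _ hi))

theorem det_of_choose_eq_zero_of_lt {a b : Fin N → ℕ} (ha : Antitone a) (hb : Antitone b)
    {k : Fin N} (hk : a k < b k) : det (of fun i j => ((a i).choose (b j) : R)) = 0 :=
  det_eq_zero_of_antitone ha hb _ (fun i j hij => by simp [Nat.choose_eq_zero_of_lt hij]) hk

theorem of_sub_one_pow_eq_mul (p : Fin N → R) {a : Fin N → ℕ} {M : ℕ}
    (ha : ∀ i, a i ≤ M) :
    of (fun i j => (p j - 1) ^ a i) =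
      of (fun i (b : Fin (M + 1)) => (-1 : R) ^ ((b : ℕ) + a i) * (a i).choose b) *
        of fun (b : Fin (M + 1)) j => p j ^ (b : ℕ) := by
  ext i j
  simp only [of_apply, mul_apply, sub_one_pow_eq_sum_fin (p j) (ha i)]

theorem det_of_neg_one_pow_mul_choose (a b : Fin N → ℕ) :
    det (of fun i j => (-1 : R) ^ (b j + a i) * (a i).choose (b j)) =
      (-1) ^ (∑ i, a i + ∑ i, b i) * det (of fun i j => ((a i).choose (b j) : R)) := by
  calc
    _ = det (of fun i j => (-1 : R) ^ b j * ((-1) ^ a i * (a i).choose (b j))) := by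
      simp only [pow_add, mul_assoc]
    _ = (∏ j, (-1 : R) ^ b j) *
          ((∏ i, (-1) ^ a i) * det (of fun i j => ((a i).choose (b j) : R))) := by
      rw [← det_mul_column, ← det_mul_row]
      rfl
    _ = _ := by
      rw [prod_pow_eq_pow_sum, prod_pow_eq_pow_sum, pow_add]
      ring

open Classical in
theorem det_of_sub_one_pow_eq_sum_strictAnti (p : Fin N → R) {a : Fin N → ℕ} {M : ℕ}
    (ha : ∀ i, a i ≤ M) :
    det (of fun i j => (p j - 1) ^ a i) =
      ∑ b ∈ univ.filter (StrictAnti : (Fin N → Fin (M + 1)) → Prop),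
        (-1) ^ (∑ i, a i + ∑ i, (b i : ℕ)) * det (of fun i j => ((a i).choose (b j) : R)) *
          det (of fun i j => p j ^ (b i : ℕ)) := by
  rw [of_sub_one_pow_eq_mul p ha, det_mul_eq_sum_strictAnti]
  refine sum_congr rfl fun b _ => ?_
  rw [← det_of_neg_one_pow_mul_choose]
  rfl

theorem det_of_sub_one_pow_staircase_eq_sum (p : Fin N → R) {l : Fin N → ℕ}
    (hl : Antitone l) :
    det (of fun i j : Fin N => (p j - 1) ^ (l i + (N - 1 - i.val))) =
      ∑ μ : (∀ i : Fin N, Fin (l i + 1)),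
        if Antitone (fun i => ((μ i : ℕ))) then
          (-1 : R) ^ ((∑ i, l i) - ∑ i, ((μ i : ℕ))) *
          (of fun i j : Fin N =>
            ((l i + (N - 1 - i.val)).choose ((μ j : ℕ) + (N - 1 - j.val)) : R)).det *
          (of fun i j : Fin N => p j ^ ((μ i : ℕ) + (N - 1 - i.val))).det
        else 0 := by
  classical
  have ha : Antitone fun i : Fin N => l i + (N - 1 - i) :=
    hl.add fun i j (hij : i ≤ j) => Nat.sub_le_sub_left hij _
  obtain ⟨M, hM⟩ : ∃ M, ∀ i : Fin N, l i + (N - 1 - i) ≤ M :=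
    ⟨∑ j : Fin N, (l j + (N - 1 - j)), fun i =>
      single_le_sum (f := fun j : Fin N => l j + (N - 1 - j)) (by simp) (mem_univ i)⟩
  let shift (μ : ∀ i : Fin N, Fin (l i + 1)) (i : Fin N) : Fin (M + 1) :=
    ⟨μ i + (N - 1 - i), by have := (μ i).isLt; have := hM i; omega⟩
  have hsign (μ : ∀ i : Fin N, Fin (l i + 1)) : (-1 : R) ^ (∑ i, l i - ∑ i, (μ i : ℕ)) =
      (-1) ^ (∑ i, (l i + (N - 1 - i)) + ∑ i, (shift μ i : ℕ)) := by
    have : ∑ i, (μ i : ℕ) ≤ ∑ i, l i :=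
      sum_le_sum fun i _ => Nat.lt_succ_iff.mp (μ i).isLt
    rw [neg_one_pow_eq_pow_mod_two, neg_one_pow_eq_pow_mod_two (R := R) (_ + _)]
    simp only [shift, sum_add_distrib]
    congr 1
    omega
  rw [det_of_sub_one_pow_eq_sum_strictAnti p hM, ← sum_filter]
  symm
  refine sum_bij_ne_zero (fun μ _ _ => shift μ) ?_ ?_ ?_ ?_
  · intro μ hμ _
    rw [mem_filter]
    exact ⟨mem_univ _, fun i j hij => (mem_filter.mp hμ).2.strictAnti_add_staircase hij⟩
  · intro μ _ _ ν _ _ h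
    funext i
    have := congrArg Fin.val (congrFun h i)
    exact Fin.ext (by simpa [shift] using this)
  · intro b hb hne
    have hb' : StrictAnti fun i => (b i : ℕ) :=
      Fin.val_strictMono.comp_strictAnti (mem_filter.mp hb).2
    obtain ⟨μ, hμ, hbμ⟩ := hb'.exists_antitone_add_staircase
    have hle (i : Fin N) : (b i : ℕ) ≤ l i + (N - 1 - i) := by
      by_contra! hk
      exact hne (by rw [det_of_choose_eq_zero_of_lt ha hb'.antitone hk, mul_zero, zero_mul])
    let ν (i : Fin N) : Fin (l i + 1) := ⟨μ i, by have := hbμ i; have := hle i; omega⟩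
    have hν : shift ν = b := funext fun i => Fin.ext (hbμ i).symm
    refine ⟨ν, mem_filter.mpr ⟨mem_univ _, hμ⟩, ?_, hν⟩
    rw [hsign]
    rwa [← hν] at hne
  · intro μ _ _
    rw [hsign]

theorem det_of_sub_pow_staircase (q : Fin N → R) (c : R) :
    det (of fun i j : Fin N => (q j - c) ^ (N - 1 - i.val)) =
      det (of fun i j : Fin N => q j ^ (N - 1 - i.val)) := by
  have hvdm (v : Fin N → R) :
      of (fun i j : Fin N => v j ^ (N - 1 - i.val)) =
        ((vandermonde v).submatrix id Fin.revPerm)ᵀ := by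
    ext i j
    simp only [of_apply, transpose_apply, submatrix_apply, id_eq, vandermonde_apply,
      Fin.revPerm_apply, Fin.val_rev]
    congr 1
    omega
  rw [hvdm, hvdm, det_transpose, det_transpose, det_permute', det_permute', det_vandermonde_sub]

end Matrix

theorem char_expansion_general
    (N : ℕ) (p : Fin N → ℂ)
    (l : Fin N → ℕ) (hl : Antitone l) :
    weylChar N (fun a => p a - 1) l
      = ∑ μ : (∀ i : Fin N, Fin (l i + 1)),
          if Antitone (fun i => ((μ i : ℕ))) then
            (-1 : ℂ) ^ ((∑ i, l i) - ∑ i, ((μ i : ℕ))) *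
            (Matrix.of fun i j : Fin N =>
              ((l i + (N - 1 - i.val)).choose ((μ j : ℕ) + (N - 1 - j.val)) : ℂ)).det *
            weylChar N p (fun i => (μ i : ℕ))
          else 0 := by
  rw [weylChar, det_of_sub_pow_staircase, det_of_sub_one_pow_staircase_eq_sum p hl, sum_div]
  refine sum_congr rfl fun μ _ => ?_
  split_ifs
  · rw [weylChar, mul_div_assoc]
  · exact zero_div _

/-- The character expansion `χ_λ(g - 1) = ∑_{μ ⊆ λ} c_{λμ} χ_μ(g)` with
`c_{λμ} = (-1)^{|λ|-|μ|} det (binom (λᵢ+N-i) (μⱼ+N-j))`. -/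
theorem char_expansion
    (N : ℕ) (p : Fin N → ℂ) (hp : Function.Injective p)
    (l : Fin N → ℕ) (hl : Antitone l) :
    weylChar N (fun a => p a - 1) l
      = ∑ μ : (∀ i : Fin N, Fin (l i + 1)),
          if Antitone (fun i => ((μ i : ℕ))) then
            (-1 : ℂ) ^ ((∑ i, l i) - ∑ i, ((μ i : ℕ))) *
            (Matrix.of fun i j : Fin N =>
              ((l i + (N - 1 - i.val)).choose ((μ j : ℕ) + (N - 1 - j.val)) : ℂ)).det *
            weylChar N p (fun i => (μ i : ℕ))
          else 0 :=
  char_expansion_general N p l hl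
end

section
/- Let M be an m×m matrix over a commutative ring and, for index sets, let M[j;k] denote the minor with rows j and columns k deleted. Then the Jacobi identity holds: M[∅;∅]·M[{j₁,j₂};{k₁,k₂}] = M[{j₁};{k₁}]·M[{j₂};{k₂}] − M[{j₁};{k₂}]·M[{j₂};{k₁}], for j₁ < j₂ and k₁ < k₂, where M[∅;∅] = det M. -/
/-!
Write `d = det M` and let `P` be the identity matrix with rows `j₁, j₂` replaced by the rows
`k₁, k₂` of `adj M`. Since `adj M * M = d • 1`, the product `P * M` is `M` with rows `j₁, j₂`
replaced by `d • e_{k₁}, d • e_{k₂}`, whose determinant is `d²` times the doubly deleted minor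
(up to sign). On the other hand `det P` is a `2 × 2` minor of `adj M`, i.e. the right-hand side
up to the same sign. This proves the identity multiplied by `d`; the factor `d` cancels for the
generic matrix over `ℤ[X_ij]`, and the identity then specializes to every commutative ring.
-/

open Matrix

/-- The strictly monotone map `Fin n → Fin (n+2)` skipping `j₁ < j₂`;
used to delete two rows (or columns) from a matrix. -/
def skipTwo {n : ℕ} (j₁ j₂ : Fin (n + 2)) (h : j₁ < j₂) : Fin n → Fin (n + 2) :=
  fun i => j₂.succAbove
    ((j₁.castLT (lt_of_lt_of_le (Fin.lt_iff_val_lt_val.mp h)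
      (Nat.lt_succ_iff.mp j₂.isLt)) : Fin (n + 1)).succAbove i)

theorem Pi.single_comp_of_injective {ι κ R : Type*} [DecidableEq ι] [DecidableEq κ] [Zero R]
    {f : ι → κ} (hf : Function.Injective f) (i : ι) (r : R) :
    (Pi.single (f i) r : κ → R) ∘ f = Pi.single i r :=
  Function.update_comp_eq_of_injective _ hf i r

namespace Matrix

theorem submatrix_updateRow_of_injective {l m o p α : Type*} [DecidableEq l] [DecidableEq m]
    (A : Matrix m p α) {f : l → m} (hf : Function.Injective f) (i : l) (v : p → α) (g : o → p) :
    (A.updateRow (f i) v).submatrix f g = (A.submatrix f g).updateRow i (v ∘ g) := by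
  ext r c
  obtain rfl | hr := eq_or_ne r i
  · simp
  · simp [hr, hf.ne hr]

section Fintype

variable {n R : Type*} [Fintype n] [DecidableEq n] [CommRing R]

theorem adjugate_vecMul (M : Matrix n n R) (k : n) :
    adjugate M k ᵥ* M = M.det • Pi.single k 1 := by
  ext c
  simpa [vecMul, dotProduct, mul_apply, one_apply, Pi.single_apply, eq_comm] using
    congrFun (congrFun (adjugate_mul M) k) c

theorem det_one_updateRow_updateRow {i₁ i₂ : n} (h : i₁ ≠ i₂) (u w : n → R) :
    (((1 : Matrix n n R).updateRow i₁ u).updateRow i₂ w).det = u i₁ * w i₂ - u i₂ * w i₁ := by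
  let U : Matrix n (Fin 2) R := (1 : Matrix n n R).submatrix id ![i₁, i₂]
  let V : Matrix (Fin 2) n R := of ![u - Pi.single i₁ 1, w - Pi.single i₂ 1]
  have hUV : ((1 : Matrix n n R).updateRow i₁ u).updateRow i₂ w = 1 + U * V := by
    ext k c
    simp only [U, V, updateRow_apply, add_apply, mul_apply, Fin.sum_univ_two, submatrix_apply,
      one_apply, of_apply, Pi.sub_apply, Pi.single_apply, id, cons_val_zero, cons_val_one]
    grind
  have hVU : V * U = V.submatrix id ![i₁, i₂] := mul_submatrix_one (Equiv.refl n) _ V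
  rw [hUV, det_one_add_mul_comm, hVU, det_fin_two]
  simp [V, h, Ne.symm h]

theorem det_mul_det_mul_det_updateRow_single_updateRow_single (M : Matrix n n R) {j₁ j₂ : n}
    (hj : j₁ ≠ j₂) (k₁ k₂ : n) :
    M.det * (M.det * ((M.updateRow j₁ (Pi.single k₁ 1)).updateRow j₂ (Pi.single k₂ 1)).det) =
      M.det * (adjugate M k₁ j₁ * adjugate M k₂ j₂ - adjugate M k₁ j₂ * adjugate M k₂ j₁) := by
  let P := ((1 : Matrix n n R).updateRow j₁ (adjugate M k₁)).updateRow j₂ (adjugate M k₂)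
  have hPM : P * M =
      (M.updateRow j₁ (M.det • Pi.single k₁ 1)).updateRow j₂ (M.det • Pi.single k₂ 1) := by
    rw [updateRow_mul, updateRow_mul, one_mul, adjugate_vecMul, adjugate_vecMul]
  have hdet := congrArg det hPM
  rw [det_mul, det_one_updateRow_updateRow hj, det_updateRow_smul, updateRow_comm _ hj,
    det_updateRow_smul, updateRow_comm _ hj.symm] at hdet
  linear_combination -hdet

theorem det_mul_det_updateRow_single_updateRow_single (M : Matrix n n R) {j₁ j₂ : n}
    (hj : j₁ ≠ j₂) (k₁ k₂ : n) :
    M.det * ((M.updateRow j₁ (Pi.single k₁ 1)).updateRow j₂ (Pi.single k₂ 1)).det =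
      adjugate M k₁ j₁ * adjugate M k₂ j₂ - adjugate M k₁ j₂ * adjugate M k₂ j₁ := by
  set X := mvPolynomialX n n ℤ
  set f : MvPolynomial (n × n) ℤ →ₐ[ℤ] R := MvPolynomial.aeval fun p ↦ M p.1 p.2
  have hX := congrArg f <| mul_left_cancel₀ (det_mvPolynomialX_ne_zero n ℤ) <|
    det_mul_det_mul_det_updateRow_single_updateRow_single X hj k₁ k₂
  have hM : f.mapMatrix X = M := mvPolynomialX_mapMatrix_aeval ℤ M
  have hsingle (k : n) : ⇑f ∘ Pi.single k 1 = Pi.single k 1 := by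
    ext c; rcases eq_or_ne c k with rfl | hc <;> simp [*]
  have hN : f.mapMatrix ((X.updateRow j₁ (Pi.single k₁ 1)).updateRow j₂ (Pi.single k₂ 1)) =
      (M.updateRow j₁ (Pi.single k₁ 1)).updateRow j₂ (Pi.single k₂ 1) := by
    rw [AlgHom.mapMatrix_apply, map_updateRow, map_updateRow, hsingle, hsingle,
      ← AlgHom.mapMatrix_apply, hM]
  have hadj (k j : n) : f (X.adjugate k j) = M.adjugate k j :=
    (congrFun₂ (f.map_adjugate X) k j).trans (by rw [hM])
  rwa [map_mul, map_sub, map_mul, map_mul, AlgHom.map_det, AlgHom.map_det, hM, hN, hadj, hadj,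
    hadj, hadj] at hX

end Fintype

variable {R : Type*} [CommRing R]

theorem det_updateRow_single_updateRow_single_fin {n : ℕ}
    (M : Matrix (Fin (n + 2)) (Fin (n + 2)) R) {j₁ j₂ k₁ k₂ : Fin (n + 2)} (hj : j₁ < j₂)
    (hk : k₁ < k₂) :
    ((M.updateRow j₁ (Pi.single k₁ 1)).updateRow j₂ (Pi.single k₂ 1)).det =
      (-1) ^ (j₁ + k₁ + (j₂ + k₂) : ℕ) *
        (M.submatrix (skipTwo j₁ j₂ hj) (skipTwo k₁ k₂ hk)).det := by
  set j₁' : Fin (n + 1) := j₁.castLT (lt_of_lt_of_le hj (Nat.lt_succ_iff.mp j₂.isLt))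
  set k₁' : Fin (n + 1) := k₁.castLT (lt_of_lt_of_le hk (Nat.lt_succ_iff.mp k₂.isLt))
  have hj₁ : j₂.succAbove j₁' = j₁ := Fin.succAbove_of_castSucc_lt _ _ hj
  have hk₁ : k₂.succAbove k₁' = k₁ := Fin.succAbove_of_castSucc_lt _ _ hk
  conv_lhs => rw [← adjugate_apply, adjugate_fin_succ_eq_det_submatrix, ← hj₁, ← hk₁,
    submatrix_updateRow_of_injective _ Fin.succAbove_right_injective,
    Pi.single_comp_of_injective Fin.succAbove_right_injective, ← adjugate_apply,
    adjugate_fin_succ_eq_det_submatrix, submatrix_submatrix]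
  rw [Fin.val_castLT, Fin.val_castLT, mul_left_comm, ← mul_assoc, ← pow_add]
  rfl

end Matrix

/-- Desnanot–Jacobi (Dodgson) identity:
`det M · M[{j₁,j₂};{k₁,k₂}] = M[{j₁};{k₁}]·M[{j₂};{k₂}] - M[{j₁};{k₂}]·M[{j₂};{k₁}]`. -/
theorem desnanot_jacobi
    {R : Type*} [CommRing R] (n : ℕ)
    (M : Matrix (Fin (n + 2)) (Fin (n + 2)) R)
    (j₁ j₂ k₁ k₂ : Fin (n + 2)) (hj : j₁ < j₂) (hk : k₁ < k₂) :
    M.det * (M.submatrix (skipTwo j₁ j₂ hj) (skipTwo k₁ k₂ hk)).det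
      = (M.submatrix j₁.succAbove k₁.succAbove).det *
          (M.submatrix j₂.succAbove k₂.succAbove).det
        - (M.submatrix j₁.succAbove k₂.succAbove).det *
          (M.submatrix j₂.succAbove k₁.succAbove).det := by
  have h := det_mul_det_updateRow_single_updateRow_single M hj.ne k₁ k₂
  rw [det_updateRow_single_updateRow_single_fin M hj hk] at h
  simp only [adjugate_fin_succ_eq_det_submatrix] at h
  -- both sides of `h` carry the sign `(-1) ^ (j₁ + k₁ + (j₂ + k₂))`
  refine ((isUnit_one.neg).pow (j₁ + k₁ + (j₂ + k₂) : ℕ)).mul_left_cancel ?_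
  linear_combination h
end

section
/- Let h be an N×N complex matrix and n ≥ 1. Define the matrix derivative d acting on scalar functions f of h as (d f)(h) = ∑_{a,b} e_{ab} ∂/∂ε f(h + ε e_{ba})|_{ε=0}, extended to n tensor slots d₁,…,dₙ. Then for any z ∈ ℂ, dₙ⋯d₁ applied to w(z) = (det(I − z h))^{-1} equals [∑_{σ ∈ Sₙ} P_σ · ∏_{i=1}^n (z/(I − h^{(i)} z))] · w(z), where P_σ is the permutation operator on (ℂ^N)^{⊗n} and h^{(i)} acts as h in the i-th slot. -/
/-!
Write `hε = h + ∑ᵢ εᵢ e_{Jᵢ Iᵢ}`, `w(ε) = det (1 - z hε)⁻¹` and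
`a_{pq}(ε) = z (1 - z hε)⁻¹_{I_p J_q}`. Since each `εₖ` enters through a rank-one matrix,
`∂ₖ a_{pq} = a_{pk} a_{kq}` and `∂ₖ w = a_{kk} w`. Hence `∂ₖ` sends `w · perm (a_{g_p g_q})`
to `w · perm (a_{g'_p g'_q})` with `g' = (k, g)`: a permutation of the enlarged index set
either fixes the new index or inserts it into a cycle of a permutation of the old ones.
Starting from `w` and differentiating in `ε₁, …, εₙ` yields `w · perm (a) = w ∑_σ ∏ᵢ a_{i σ(i)}`,
which is the `(I, J)` entry of the right-hand side.
-/

open Matrix Finset Equiv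
open scoped ContDiff

theorem Matrix.permanent_submatrix_cons {R ι : Type*} [CommSemiring R] {m : ℕ}
    (A : Matrix ι ι R) (k : ι) (g : Fin m → ι) :
    (A.submatrix (Fin.cons k g) (Fin.cons k g)).permanent =
      A k k * (A.submatrix g g).permanent +
        ∑ σ : Perm (Fin m), ∑ j,
          (∏ i ∈ univ.erase j, A (g (σ i)) (g i)) * (A (g (σ j)) k * A k (g j)) := by
  -- `decomposeFin` writes a permutation of `Fin (m + 1)` as `swap 0 p * τ.succ`; `p = 0` fixes
  -- the new index, `p = (τ j).succ` inserts it between `j` and `τ j` in the cycle of `τ`.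
  simp only [permanent, univ_perm_fin_succ, sum_map, ← univ_product_univ, sum_product,
    Fin.sum_univ_succ, Fin.prod_univ_succ, toEmbedding_apply, Perm.decomposeFin_symm_apply_zero,
    Perm.decomposeFin_symm_apply_succ, submatrix_apply, Fin.cons_zero, Fin.cons_succ, swap_self,
    refl_apply, mul_sum]
  congr 1
  rw [sum_comm]
  refine sum_congr rfl fun τ _ => ?_
  rw [← Equiv.sum_comp τ]
  refine sum_congr rfl fun j _ => ?_
  rw [← mul_prod_erase _ _ (mem_univ j)]
  have hfix : ∀ i ∈ univ.erase j,
      A ((Fin.cons k g : Fin (m + 1) → ι) (Equiv.swap 0 (τ j).succ (τ i).succ)) (g i) =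
        A (g (τ i)) (g i) := by
    intro i hi
    rw [swap_apply_of_ne_of_ne (Fin.succ_ne_zero _)
      (by simpa using τ.injective.ne (ne_of_mem_erase hi)), Fin.cons_succ]
  rw [prod_congr rfl hfix, swap_apply_right, Fin.cons_zero]
  ring

theorem Matrix.det_add_smul_single {m R : Type*} [Fintype m] [DecidableEq m] [CommRing R]
    (X : Matrix m m R) (t c : R) (i j : m) :
    (X + t • single i j c).det = X.det + t * c * X.adjugate j i := by
  have hrow : X + t • single i j c = X.updateRow i (X i + (t * c) • Pi.single j 1) := by
    ext a b
    by_cases ha : a = i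
    · subst ha
      rcases eq_or_ne b j with rfl | hb
      · simp
      · simp [hb, hb.symm]
    · simp [ha, Ne.symm ha]
  rw [hrow, det_updateRow_add, updateRow_eq_self, det_updateRow_smul, adjugate_apply, mul_assoc]

theorem Matrix.mul_single_mul_apply {m R : Type*} [Fintype m] [DecidableEq m] [Semiring R]
    (A B : Matrix m m R) (i j : m) (c : R) (a b : m) :
    (A * single i j c * B) a b = A a i * c * B j b := by
  rw [Matrix.mul_assoc, mul_apply, sum_eq_single i, single_mul_apply_same, mul_assoc]
  · intro x _ hx
    rw [single_mul_apply_of_ne _ _ _ _ _ hx, mul_zero]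
  · simp

section Calculus

variable {𝕜 : Type*} [NontriviallyNormedField 𝕜]

theorem HasDerivAt.matrix_permanent {n : Type*} [Fintype n] [DecidableEq n]
    {B : 𝕜 → Matrix n n 𝕜} {B' : Matrix n n 𝕜} {t : 𝕜}
    (hB : ∀ i j, HasDerivAt (fun s => B s i j) (B' i j) t) :
    HasDerivAt (fun s => (B s).permanent)
      (∑ σ : Perm n, ∑ j, (∏ i ∈ univ.erase j, B t (σ i) i) * B' (σ j) j) t := by
  unfold permanent
  exact HasDerivAt.fun_sum fun σ _ => HasDerivAt.fun_finsetProd fun i _ => hB (σ i) i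

theorem iteratedFDeriv_eq_of_hasLineDerivAt_cons {E G ι : Type*}
    [NormedAddCommGroup E] [NormedSpace 𝕜 E] [NormedAddCommGroup G] [NormedSpace 𝕜 G]
    {U : Set E} (hU : IsOpen U) {F : ∀ {m : ℕ}, (Fin m → ι) → E → G}
    (hF : ∀ {m} (g : Fin m → ι), ContDiffOn 𝕜 ∞ (F g) U) {v : ι → E}
    (hFv : ∀ {m} (g : Fin m → ι) (k : ι), ∀ x ∈ U,
      HasLineDerivAt 𝕜 (F g) (F (Fin.cons k g) x) x (v k)) {m : ℕ} (e : Fin m → ι) :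
    ∀ x ∈ U, iteratedFDeriv 𝕜 m (F (Fin.elim0 : Fin 0 → ι)) x (v ∘ e) = F e x := by
  induction m with
  | zero =>
    intro x _
    rw [iteratedFDeriv_zero_apply, Subsingleton.elim e Fin.elim0]
  | succ m ih =>
    intro x hx
    have hsmooth : ContDiffAt 𝕜 ∞ (F (Fin.elim0 : Fin 0 → ι)) x :=
      (hF _).contDiffAt (hU.mem_nhds hx)
    have hlocal :
        (fun y => iteratedFDeriv 𝕜 m (F (Fin.elim0 : Fin 0 → ι)) y (v ∘ Fin.tail e))
          =ᶠ[nhds x] F (Fin.tail e) :=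
      Filter.eventually_of_mem (hU.mem_nhds hx) (ih (Fin.tail e))
    have hdiff : DifferentiableAt 𝕜 (F (Fin.tail e)) x :=
      ((hF _).contDiffAt (hU.mem_nhds hx)).differentiableAt (by simp)
    calc iteratedFDeriv 𝕜 (m + 1) (F (Fin.elim0 : Fin 0 → ι)) x (v ∘ e)
        = fderiv 𝕜
            (fun y => iteratedFDeriv 𝕜 m (F (Fin.elim0 : Fin 0 → ι)) y (v ∘ Fin.tail e))
            x (v (e 0)) :=
          (fderiv_continuousMultilinear_apply_const_apply
            (hsmooth.differentiableAt_iteratedFDeriv (by exact_mod_cast ENat.natCast_lt_top m))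
            _ _).symm
      _ = fderiv 𝕜 (F (Fin.tail e)) x (v (e 0)) := by rw [hlocal.fderiv_eq]
      _ = F e x := by
        rw [← hdiff.lineDeriv_eq_fderiv, (hFv _ _ x hx).lineDeriv, Fin.cons_self_tail]

variable {m : Type*} [Fintype m] [DecidableEq m] {E : Type*} [NormedAddCommGroup E]
  [NormedSpace 𝕜 E] {f : E → Matrix m m 𝕜} {n : WithTop ℕ∞}

theorem contDiff_det (hf : ∀ i j, ContDiff 𝕜 n fun x => f x i j) :
    ContDiff 𝕜 n fun x => (f x).det := by
  simp only [det_apply']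
  exact ContDiff.sum fun σ _ => contDiff_const.mul (contDiff_prod fun i _ => hf _ _)

theorem contDiffOn_inv_apply (hf : ∀ i j, ContDiff 𝕜 n fun x => f x i j) (a b : m) :
    ContDiffOn 𝕜 n (fun x => (f x)⁻¹ a b) {x | (f x).det ≠ 0} := by
  have hadj : ContDiff 𝕜 n fun x => (f x).adjugate a b := by
    simp only [adjugate_apply]
    refine contDiff_det fun i j => ?_
    by_cases hi : i = b
    · simpa [hi] using contDiff_const
    · simpa [hi] using hf i j
  refine (((contDiff_det hf).contDiffOn.inv fun x hx => hx).mul hadj.contDiffOn).congr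
    fun x _ => ?_
  rw [Matrix.inv_def, Matrix.smul_apply, Ring.inverse_eq_inv', smul_eq_mul, Pi.inv_apply]

end Calculus

section MatrixInverse

attribute [local instance] Matrix.linftyOpNormedRing Matrix.linftyOpNormedAlgebra

theorem hasDerivAt_inv_add_smul_apply {𝕜 m : Type*} [RCLike 𝕜] [Fintype m] [DecidableEq m]
    {X : Matrix m m 𝕜} (hX : X.det ≠ 0) (Y : Matrix m m 𝕜) (a b : m) :
    HasDerivAt (fun t : 𝕜 => (X + t • Y)⁻¹ a b) (-(X⁻¹ * Y * X⁻¹) a b) 0 := by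
  obtain ⟨u, rfl⟩ : IsUnit X := (isUnit_iff_isUnit_det X).mpr hX.isUnit
  have hline : HasDerivAt (fun t : 𝕜 => (u : Matrix m m 𝕜) + t • Y) Y 0 :=
    (((hasDerivAt_id (0 : 𝕜)).smul_const Y).const_add _).congr_deriv (one_smul 𝕜 Y)
  have hinv := (hasFDerivAt_ringInverse (𝕜 := 𝕜) u).comp_hasDerivAt_of_eq 0 hline (by simp)
  have hentry := (LinearMap.toContinuousLinearMap (entryLinearMap 𝕜 𝕜 a b)).hasFDerivAt
    |>.comp_hasDerivAt (0 : 𝕜) hinv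
  refine (hentry.congr_deriv ?_).congr_of_eventuallyEq
    (Filter.Eventually.of_forall fun t => congrFun₂ (nonsing_inv_eq_ringInverse _) a b)
  rw [Matrix.coe_units_inv]
  rfl

end MatrixInverse

section Perturbation

variable {𝕜 m ι : Type*} [RCLike 𝕜] [DecidableEq m] [Fintype ι]
  (h : Matrix m m 𝕜) (z : 𝕜) (I J : ι → m)

def perturbedMatrix (ε : ι → 𝕜) : Matrix m m 𝕜 :=
  1 - z • (h + ∑ i, ε i • single (J i) (I i) 1)

theorem perturbedMatrix_zero : perturbedMatrix h z I J 0 = 1 - z • h := by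
  simp [perturbedMatrix]

theorem perturbedMatrix_add_smul_single [DecidableEq ι] (ε : ι → 𝕜) (t : 𝕜) (k : ι) :
    perturbedMatrix h z I J (ε + t • Pi.single k 1) =
      perturbedMatrix h z I J ε + t • single (J k) (I k) (-z) := by
  have hsingle : single (J k) (I k) (-z) = (-z) • single (J k) (I k) (1 : 𝕜) := by
    rw [smul_single, smul_eq_mul, mul_one]
  simp only [perturbedMatrix, Pi.add_apply, Pi.smul_apply, add_smul, sum_add_distrib,
    Pi.single_apply, smul_eq_mul, mul_ite, mul_one, mul_zero, ite_smul, zero_smul,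
    sum_ite_eq', mem_univ, if_true, hsingle]
  module

theorem contDiff_perturbedMatrix_apply {n : WithTop ℕ∞} (a b : m) :
    ContDiff 𝕜 n fun ε => perturbedMatrix h z I J ε a b := by
  simp only [perturbedMatrix, Matrix.sub_apply, Matrix.smul_apply, Matrix.add_apply,
    Matrix.sum_apply, smul_eq_mul]
  exact contDiff_const.sub (contDiff_const.mul (contDiff_const.add
    (ContDiff.sum fun i _ => (contDiff_apply 𝕜 𝕜 i).mul contDiff_const)))

variable [Fintype m]

noncomputable def resolventSubmatrix (ε : ι → 𝕜) : Matrix ι ι 𝕜 :=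
  (z • (perturbedMatrix h z I J ε)⁻¹).submatrix I J

noncomputable def invDetMulPermanent {p : ℕ} (g : Fin p → ι) (ε : ι → 𝕜) : 𝕜 :=
  (perturbedMatrix h z I J ε).det⁻¹ * ((resolventSubmatrix h z I J ε).submatrix g g).permanent

theorem isOpen_setOf_det_perturbedMatrix_ne_zero :
    IsOpen {ε | (perturbedMatrix h z I J ε).det ≠ 0} :=
  isOpen_ne_fun (contDiff_det (n := 0) (contDiff_perturbedMatrix_apply h z I J)).continuous
    continuous_const

theorem contDiffOn_invDetMulPermanent {p : ℕ} (g : Fin p → ι) :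
    ContDiffOn 𝕜 ∞ (invDetMulPermanent h z I J g)
      {ε | (perturbedMatrix h z I J ε).det ≠ 0} := by
  have hres : ∀ a b, ContDiffOn 𝕜 ∞ (fun ε => resolventSubmatrix h z I J ε a b)
      {ε | (perturbedMatrix h z I J ε).det ≠ 0} := fun a b =>
    (contDiffOn_inv_apply (contDiff_perturbedMatrix_apply h z I J) (I a) (J b)).const_smul z
  exact ((contDiff_det (contDiff_perturbedMatrix_apply h z I J)).contDiffOn.inv
    fun _ hε => hε).mul (ContDiffOn.sum fun σ _ => contDiffOn_prod fun i _ => hres _ _)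

variable [DecidableEq ι] {h z I J} {ε : ι → 𝕜}

theorem hasDerivAt_det_perturbedMatrix_inv (hε : (perturbedMatrix h z I J ε).det ≠ 0) (k : ι) :
    HasDerivAt (fun t : 𝕜 => (perturbedMatrix h z I J (ε + t • Pi.single k 1)).det⁻¹)
      (resolventSubmatrix h z I J ε k k * (perturbedMatrix h z I J ε).det⁻¹) 0 := by
  set X := perturbedMatrix h z I J ε
  have hdet : ∀ t : 𝕜, (perturbedMatrix h z I J (ε + t • Pi.single k 1)).det =
      X.det + t * (-z * X.adjugate (I k) (J k)) := fun t => by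
    rw [perturbedMatrix_add_smul_single, det_add_smul_single, mul_assoc]
  simp_rw [hdet]
  refine ((((hasDerivAt_id (0 : 𝕜)).mul_const _).const_add X.det).inv
    (by simpa using hε)).congr_deriv ?_
  simp only [X, resolventSubmatrix, submatrix_apply, Matrix.smul_apply, smul_eq_mul,
    Matrix.inv_def, Ring.inverse_eq_inv', id_eq, one_mul, neg_mul, neg_neg, zero_mul, add_zero]
  field_simp

theorem hasDerivAt_resolventSubmatrix_apply (hε : (perturbedMatrix h z I J ε).det ≠ 0)
    (k p q : ι) :
    HasDerivAt (fun t : 𝕜 => resolventSubmatrix h z I J (ε + t • Pi.single k 1) p q)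
      (resolventSubmatrix h z I J ε p k * resolventSubmatrix h z I J ε k q) 0 := by
  set X := perturbedMatrix h z I J ε
  have hres : ∀ t : 𝕜, resolventSubmatrix h z I J (ε + t • Pi.single k 1) p q =
      z * (X + t • single (J k) (I k) (-z))⁻¹ (I p) (J q) := fun t => by
    rw [resolventSubmatrix, perturbedMatrix_add_smul_single]
    rfl
  simp_rw [hres]
  refine ((hasDerivAt_inv_add_smul_apply hε _ (I p) (J q)).const_mul z).congr_deriv ?_
  simp only [X, resolventSubmatrix, submatrix_apply, Matrix.smul_apply, smul_eq_mul,
    mul_single_mul_apply]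
  ring

theorem hasLineDerivAt_invDetMulPermanent (hε : (perturbedMatrix h z I J ε).det ≠ 0) {p : ℕ}
    (g : Fin p → ι) (k : ι) :
    HasLineDerivAt 𝕜 (invDetMulPermanent h z I J g)
      (invDetMulPermanent h z I J (Fin.cons k g) ε) ε (Pi.single k 1) := by
  have hperm := HasDerivAt.matrix_permanent
    (B := fun t : 𝕜 => (resolventSubmatrix h z I J (ε + t • Pi.single k 1)).submatrix g g)
    fun i j => hasDerivAt_resolventSubmatrix_apply hε k (g i) (g j)
  refine ((hasDerivAt_det_perturbedMatrix_inv hε k).mul hperm).congr_deriv ?_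
  simp only [zero_smul, add_zero, submatrix_apply, invDetMulPermanent, permanent_submatrix_cons]
  ring

end Perturbation

theorem Matrix.of_ite_comp_mul_of_prod_apply {R m ι : Type*} [CommSemiring R] [Fintype m]
    [DecidableEq m] [Fintype ι] [DecidableEq ι] (A : Matrix m m R) (σ : Perm ι) (I J : ι → m) :
    ((of fun I J : ι → m => if I = J ∘ σ then (1 : R) else 0) *
      of fun I J : ι → m => ∏ i, A (I i) (J i)) I J = ∏ i, A (I (σ.symm i)) (J i) := by
  simp only [mul_apply, of_apply, ite_mul, one_mul, zero_mul, ← Equiv.comp_symm_eq,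
    sum_ite_eq, mem_univ, if_true, Function.comp_apply]

/-- Formula for the `n`-fold matrix derivative of `w(z) = det(1 - z h)⁻¹`:
`dₙ⋯d₁ w(z) = (∑_{σ∈Sₙ} P_σ ∏ᵢ z(1 - h⁽ⁱ⁾z)⁻¹) · w(z)` as operators on
`(ℂᴺ)^{⊗n}` (encoded as matrices indexed by multi-indices `Fin n → Fin N`).
The entry `(I,J)` of `dₙ⋯d₁ w(z)` is the mixed partial derivative
`∂_{ε₁}⋯∂_{εₙ}` at `ε = 0` of `w(z)` evaluated at `h + ∑ᵢ εᵢ e_{Jᵢ Iᵢ}`. -/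
theorem matrix_derivative_of_w
    (N n : ℕ) (h : Matrix (Fin N) (Fin N) ℂ) (z : ℂ)
    (hinv : IsUnit ((1 : Matrix (Fin N) (Fin N) ℂ) - z • h)) :
    (Matrix.of fun I J : Fin n → Fin N =>
        iteratedFDeriv ℂ n
          (fun ε : Fin n → ℂ =>
            (((1 : Matrix (Fin N) (Fin N) ℂ) -
              z • (h + ∑ i : Fin n,
                ε i • Matrix.single (J i) (I i) (1 : ℂ))).det)⁻¹)
          0 (fun i : Fin n => Pi.single i (1 : ℂ)))
      = (((1 : Matrix (Fin N) (Fin N) ℂ) - z • h).det)⁻¹ •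
          ∑ σ : Equiv.Perm (Fin n),
            (Matrix.of fun I J : Fin n → Fin N =>
              if I = J ∘ σ then (1 : ℂ) else 0) *
            (Matrix.of fun I J : Fin n → Fin N =>
              ∏ i : Fin n,
                (z • ((1 : Matrix (Fin N) (Fin N) ℂ) - z • h)⁻¹) (I i) (J i)) := by
  ext I J
  have h0 : (0 : Fin n → ℂ) ∈ {ε | (perturbedMatrix h z I J ε).det ≠ 0} := by
    simpa [perturbedMatrix_zero, isUnit_iff_isUnit_det] using hinv
  have hinit : invDetMulPermanent h z I J (Fin.elim0 : Fin 0 → Fin n) =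
      fun ε => (perturbedMatrix h z I J ε).det⁻¹ :=
    funext fun ε => by rw [invDetMulPermanent, permanent_isEmpty, mul_one]
  have hderiv := iteratedFDeriv_eq_of_hasLineDerivAt_cons
    (isOpen_setOf_det_perturbedMatrix_ne_zero h z I J) (contDiffOn_invDetMulPermanent h z I J)
    (fun g k _ hε => hasLineDerivAt_invDetMulPermanent hε g k) id 0 h0
  rw [hinit] at hderiv
  rw [of_apply]
  refine hderiv.trans ?_
  rw [Matrix.smul_apply, Matrix.sum_apply, smul_eq_mul]
  simp only [of_ite_comp_mul_of_prod_apply]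
  rw [invDetMulPermanent, resolventSubmatrix, perturbedMatrix_zero, permanent,
    ← Equiv.sum_comp (Equiv.inv (Perm (Fin n)))]
  rfl
end

section
/- Let n ≥ 2 and x₁,…,xₙ be distinct complex numbers, and let h = diag(k₁,…,k_N). The Gaudin Hamiltonians H_i = h_i + ∑_{j≠i} P_{ij}/(x_i − x_j) on (ℂ^N)^{⊗n} pairwise commute: [H_i, H_j] = 0 for all i, j, where h_i acts as h in slot i and P_{ij} is the permutation operator exchanging slots i and j. -/
open Matrix Finset

/-- The diagonal twist `h = diag(k₁,…,k_N)` acting in the `i`-th tensor slot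
of `(ℂᴺ)^{⊗n}`. -/
def twistSlot (N n : ℕ) (k : Fin N → ℂ) (i : Fin n) :
    Matrix (Fin n → Fin N) (Fin n → Fin N) ℂ :=
  Matrix.of fun I J => if I = J then k (I i) else 0

/-- The permutation operator `P_{ij}` exchanging tensor slots `i` and `j`. -/
def permSlot (N n : ℕ) (i j : Fin n) :
    Matrix (Fin n → Fin N) (Fin n → Fin N) ℂ :=
  Matrix.of fun I J => if I = J ∘ (Equiv.swap i j) then 1 else 0

/-- The twisted Gaudin Hamiltonian `Hᵢ = hᵢ + ∑_{j≠i} P_{ij}/(xᵢ-xⱼ)`. -/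
noncomputable def gaudinHam (N n : ℕ) (k : Fin N → ℂ) (x : Fin n → ℂ) (i : Fin n) :
    Matrix (Fin n → Fin N) (Fin n → Fin N) ℂ :=
  twistSlot N n k i +
    ∑ j ∈ Finset.univ.erase i, (x i - x j)⁻¹ • permSlot N n i j

/-! ### Auxiliary machinery -/

/-- The permutation matrix attached to a permutation of the slots. -/
def permGen (N n : ℕ) (σ : Equiv.Perm (Fin n)) :
    Matrix (Fin n → Fin N) (Fin n → Fin N) ℂ :=
  Matrix.of fun I J => if I = J ∘ σ then 1 else 0

lemma permSlot_eq (N n : ℕ) (i j : Fin n) :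
    permSlot N n i j = permGen N n (Equiv.swap i j) := rfl

lemma permSlot_comm (N n : ℕ) (i j : Fin n) :
    permSlot N n i j = permSlot N n j i := by
  rw [permSlot_eq, permSlot_eq, Equiv.swap_comm]

lemma permGen_mul (N n : ℕ) (σ τ : Equiv.Perm (Fin n)) :
    permGen N n σ * permGen N n τ = permGen N n (σ.trans τ) := by
  ext I J
  rw [Matrix.mul_apply]
  rw [Finset.sum_eq_single (J ∘ τ)]
  · simp only [permGen, Matrix.of_apply]
    have : (J ∘ τ) ∘ σ = J ∘ ⇑(σ.trans τ) := by ext a; simp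
    rw [this]; simp
  · intro K _ hK
    simp only [permGen, Matrix.of_apply, if_neg hK, mul_zero]
  · intro h; exact absurd (Finset.mem_univ _) h

lemma twistSlot_eq (N n : ℕ) (k : Fin N → ℂ) (i : Fin n) :
    twistSlot N n k i = Matrix.diagonal (fun I => k (I i)) := rfl

lemma twist_mul_twist (N n : ℕ) (k : Fin N → ℂ) (i j : Fin n) :
    twistSlot N n k i * twistSlot N n k j = twistSlot N n k j * twistSlot N n k i := by
  rw [twistSlot_eq, twistSlot_eq, Matrix.diagonal_mul_diagonal, Matrix.diagonal_mul_diagonal]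
  ext I J; by_cases h : I = J <;> simp [Matrix.diagonal_apply, h, mul_comm]

lemma twist_mul_permGen (N n : ℕ) (k : Fin N → ℂ) (m : Fin n) (σ : Equiv.Perm (Fin n)) :
    twistSlot N n k m * permGen N n σ = permGen N n σ * twistSlot N n k (σ m) := by
  rw [twistSlot_eq, twistSlot_eq]
  ext I J
  rw [Matrix.diagonal_mul, Matrix.mul_diagonal]
  simp only [permGen, Matrix.of_apply]
  split_ifs with h
  · subst h; simp [mul_comm]
  · simp

lemma twist_mul_permSlot_left (N n : ℕ) (k : Fin N → ℂ) (i j : Fin n) :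
    twistSlot N n k i * permSlot N n i j = permSlot N n i j * twistSlot N n k j := by
  rw [permSlot_eq, twist_mul_permGen, Equiv.swap_apply_left]

lemma twist_mul_permSlot_right (N n : ℕ) (k : Fin N → ℂ) (i j : Fin n) :
    twistSlot N n k j * permSlot N n i j = permSlot N n i j * twistSlot N n k i := by
  rw [permSlot_eq, twist_mul_permGen, Equiv.swap_apply_right]

lemma twist_mul_permSlot_other (N n : ℕ) (k : Fin N → ℂ) {m i j : Fin n}
    (hmi : m ≠ i) (hmj : m ≠ j) :
    twistSlot N n k m * permSlot N n i j = permSlot N n i j * twistSlot N n k m := by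
  rw [permSlot_eq, twist_mul_permGen, Equiv.swap_apply_of_ne_of_ne hmi hmj]

lemma swap_tr1 {n : ℕ} {i j t : Fin n} (hij : i ≠ j) (hit : i ≠ t) (hjt : j ≠ t) :
    (Equiv.swap i t).trans (Equiv.swap i j) = (Equiv.swap i j).trans (Equiv.swap j t) := by
  ext z
  simp only [Equiv.trans_apply, Equiv.swap_apply_def]
  split_ifs <;> simp_all

lemma swap_tr2 {n : ℕ} {i j t : Fin n} (hij : i ≠ j) (hit : i ≠ t) (hjt : j ≠ t) :
    (Equiv.swap j t).trans (Equiv.swap i t) = (Equiv.swap i j).trans (Equiv.swap j t) := by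
  ext z
  simp only [Equiv.trans_apply, Equiv.swap_apply_def]
  split_ifs <;> simp_all

lemma swap_tr1' {n : ℕ} {i j t : Fin n} (hij : i ≠ j) (hit : i ≠ t) (hjt : j ≠ t) :
    (Equiv.swap i j).trans (Equiv.swap i t) = (Equiv.swap j t).trans (Equiv.swap i j) := by
  ext z
  simp only [Equiv.trans_apply, Equiv.swap_apply_def]
  split_ifs <;> simp_all

lemma swap_tr2' {n : ℕ} {i j t : Fin n} (hij : i ≠ j) (hit : i ≠ t) (hjt : j ≠ t) :
    (Equiv.swap i t).trans (Equiv.swap j t) = (Equiv.swap j t).trans (Equiv.swap i j) := by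
  ext z
  simp only [Equiv.trans_apply, Equiv.swap_apply_def]
  split_ifs <;> simp_all

lemma swap_disj {n : ℕ} {i j a b : Fin n} (hia : i ≠ a) (hib : i ≠ b) (hja : j ≠ a) (hjb : j ≠ b) :
    (Equiv.swap i j).trans (Equiv.swap a b) = (Equiv.swap a b).trans (Equiv.swap i j) := by
  ext z
  simp only [Equiv.trans_apply, Equiv.swap_apply_def]
  split_ifs <;> simp_all

lemma permSlot_mul_comm_disj (N n : ℕ) {i j a b : Fin n}
    (hia : i ≠ a) (hib : i ≠ b) (hja : j ≠ a) (hjb : j ≠ b) :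
    permSlot N n i j * permSlot N n a b = permSlot N n a b * permSlot N n i j := by
  rw [permSlot_eq, permSlot_eq, permGen_mul, permGen_mul, swap_disj hia hib hja hjb]

lemma coef_identity {a b c : ℂ} (hab : a ≠ b) (hac : a ≠ c) (hbc : b ≠ c) :
    (a-b)⁻¹ * (b-c)⁻¹ + (a-c)⁻¹ * (b-a)⁻¹ - (a-c)⁻¹ * (b-c)⁻¹ = 0 := by
  have h1 : a - b ≠ 0 := sub_ne_zero.mpr hab
  have h2 : a - c ≠ 0 := sub_ne_zero.mpr hac
  have h3 : b - c ≠ 0 := sub_ne_zero.mpr hbc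
  have h4 : b - a ≠ 0 := sub_ne_zero.mpr (Ne.symm hab)
  field_simp
  ring

/-- The twisted Gaudin Hamiltonians pairwise commute. -/
theorem gaudin_hamiltonians_commute
    (N n : ℕ) (hn : 2 ≤ n) (k : Fin N → ℂ) (x : Fin n → ℂ)
    (hx : Function.Injective x) :
    ∀ i j : Fin n,
      gaudinHam N n k x i * gaudinHam N n k x j
        = gaudinHam N n k x j * gaudinHam N n k x i := by
  intro i j
  rcases eq_or_ne i j with rfl | hij
  · rfl
  rw [← sub_eq_zero]
  show gaudinHam N n k x i * gaudinHam N n k x j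
        - gaudinHam N n k x j * gaudinHam N n k x i = 0
  unfold gaudinHam
  rw [show
      (twistSlot N n k i + ∑ l ∈ Finset.univ.erase i, (x i - x l)⁻¹ • permSlot N n i l) *
        (twistSlot N n k j + ∑ m ∈ Finset.univ.erase j, (x j - x m)⁻¹ • permSlot N n j m) -
      (twistSlot N n k j + ∑ m ∈ Finset.univ.erase j, (x j - x m)⁻¹ • permSlot N n j m) *
        (twistSlot N n k i + ∑ l ∈ Finset.univ.erase i, (x i - x l)⁻¹ • permSlot N n i l)
      =
      (twistSlot N n k i * twistSlot N n k j - twistSlot N n k j * twistSlot N n k i)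
      + ((twistSlot N n k i * ∑ m ∈ Finset.univ.erase j, (x j - x m)⁻¹ • permSlot N n j m
          - (∑ m ∈ Finset.univ.erase j, (x j - x m)⁻¹ • permSlot N n j m) * twistSlot N n k i)
        + ((∑ l ∈ Finset.univ.erase i, (x i - x l)⁻¹ • permSlot N n i l) * twistSlot N n k j
          - twistSlot N n k j * ∑ l ∈ Finset.univ.erase i, (x i - x l)⁻¹ • permSlot N n i l))
      + ((∑ l ∈ Finset.univ.erase i, (x i - x l)⁻¹ • permSlot N n i l) *
            ∑ m ∈ Finset.univ.erase j, (x j - x m)⁻¹ • permSlot N n j m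
        - (∑ m ∈ Finset.univ.erase j, (x j - x m)⁻¹ • permSlot N n j m) *
            ∑ l ∈ Finset.univ.erase i, (x i - x l)⁻¹ • permSlot N n i l)
      from by noncomm_ring]
  have e1 : twistSlot N n k i * twistSlot N n k j - twistSlot N n k j * twistSlot N n k i = 0 := by
    rw [twist_mul_twist, sub_self]
  have e2 :
      (twistSlot N n k i * ∑ m ∈ Finset.univ.erase j, (x j - x m)⁻¹ • permSlot N n j m
          - (∑ m ∈ Finset.univ.erase j, (x j - x m)⁻¹ • permSlot N n j m) * twistSlot N n k i)
        + ((∑ l ∈ Finset.univ.erase i, (x i - x l)⁻¹ • permSlot N n i l) * twistSlot N n k j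
          - twistSlot N n k j * ∑ l ∈ Finset.univ.erase i, (x i - x l)⁻¹ • permSlot N n i l)
        = 0 := by
    have h1 : twistSlot N n k i * ∑ m ∈ Finset.univ.erase j, (x j - x m)⁻¹ • permSlot N n j m
          - (∑ m ∈ Finset.univ.erase j, (x j - x m)⁻¹ • permSlot N n j m) * twistSlot N n k i
        = (x j - x i)⁻¹ •
            (permSlot N n i j * twistSlot N n k j - permSlot N n i j * twistSlot N n k i) := by
      rw [Finset.mul_sum, Finset.sum_mul, ← Finset.sum_sub_distrib]
      rw [Finset.sum_eq_single_of_mem i (Finset.mem_erase.mpr ⟨hij, Finset.mem_univ i⟩)]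
      · rw [mul_smul_comm, smul_mul_assoc, ← smul_sub, permSlot_comm N n j i,
          twist_mul_permSlot_left]
      · intro m hm hmi
        have hmj : m ≠ j := (Finset.mem_erase.mp hm).1
        rw [mul_smul_comm, smul_mul_assoc, ← smul_sub,
          twist_mul_permSlot_other N n k hij (Ne.symm hmi), sub_self, smul_zero]
    have h2 : (∑ l ∈ Finset.univ.erase i, (x i - x l)⁻¹ • permSlot N n i l) * twistSlot N n k j
          - twistSlot N n k j * ∑ l ∈ Finset.univ.erase i, (x i - x l)⁻¹ • permSlot N n i l
        = (x i - x j)⁻¹ •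
            (permSlot N n i j * twistSlot N n k j - permSlot N n i j * twistSlot N n k i) := by
      rw [Finset.sum_mul, Finset.mul_sum, ← Finset.sum_sub_distrib]
      rw [Finset.sum_eq_single_of_mem j (Finset.mem_erase.mpr ⟨Ne.symm hij, Finset.mem_univ j⟩)]
      · rw [smul_mul_assoc, mul_smul_comm, ← smul_sub, twist_mul_permSlot_right]
      · intro l hl hlj
        have hli : l ≠ i := (Finset.mem_erase.mp hl).1
        rw [smul_mul_assoc, mul_smul_comm, ← smul_sub,
          twist_mul_permSlot_other N n k (Ne.symm hij) (Ne.symm hlj), sub_self, smul_zero]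
    rw [h1, h2, ← add_smul]
    have hz : (x j - x i)⁻¹ + (x i - x j)⁻¹ = 0 := by
      rw [show x j - x i = -(x i - x j) from by ring, inv_neg]; ring
    rw [hz, zero_smul]
  have e3 :
      (∑ l ∈ Finset.univ.erase i, (x i - x l)⁻¹ • permSlot N n i l) *
            (∑ m ∈ Finset.univ.erase j, (x j - x m)⁻¹ • permSlot N n j m)
        - (∑ m ∈ Finset.univ.erase j, (x j - x m)⁻¹ • permSlot N n j m) *
            (∑ l ∈ Finset.univ.erase i, (x i - x l)⁻¹ • permSlot N n i l)
        = 0 := by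
    classical
    set F : Fin n → Fin n → Matrix (Fin n → Fin N) (Fin n → Fin N) ℂ :=
      fun l m => ((x i - x l)⁻¹ * (x j - x m)⁻¹) •
        (permSlot N n i l * permSlot N n j m - permSlot N n j m * permSlot N n i l) with hF
    have hSS :
        (∑ l ∈ Finset.univ.erase i, (x i - x l)⁻¹ • permSlot N n i l) *
              (∑ m ∈ Finset.univ.erase j, (x j - x m)⁻¹ • permSlot N n j m)
          - (∑ m ∈ Finset.univ.erase j, (x j - x m)⁻¹ • permSlot N n j m) *
              (∑ l ∈ Finset.univ.erase i, (x i - x l)⁻¹ • permSlot N n i l)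
          = ∑ l ∈ Finset.univ.erase i, ∑ m ∈ Finset.univ.erase j, F l m := by
      rw [Finset.sum_mul_sum, Finset.sum_mul_sum]
      rw [Finset.sum_comm (s := Finset.univ.erase j) (t := Finset.univ.erase i)]
      rw [← Finset.sum_sub_distrib]
      refine Finset.sum_congr rfl fun l hl => ?_
      rw [← Finset.sum_sub_distrib]
      refine Finset.sum_congr rfl fun m hm => ?_
      simp only [hF]
      simp only [smul_mul_assoc, mul_smul_comm, smul_smul]
      rw [mul_comm ((x j - x m)⁻¹), smul_sub]
    rw [hSS]
    -- the set of indices different from both `i` and `j`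
    set D : Finset (Fin n) := (Finset.univ.erase i).erase j with hD
    have hjD : j ∉ D := Finset.notMem_erase j _
    have hiD : i ∉ D := fun h => Finset.notMem_erase i Finset.univ
      ((Finset.mem_erase.mp h).2)
    have hsplit_i : Finset.univ.erase i = insert j D := by
      rw [hD, Finset.insert_erase (Finset.mem_erase.mpr ⟨Ne.symm hij, Finset.mem_univ j⟩)]
    have hsplit_j : Finset.univ.erase j = insert i D := by
      rw [hD, Finset.erase_right_comm,
        Finset.insert_erase (Finset.mem_erase.mpr ⟨hij, Finset.mem_univ i⟩)]
    -- inner sums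
    have hinner : ∀ l ∈ D, ∑ m ∈ Finset.univ.erase j, F l m = F l i + F l l := by
      intro l hl
      have hli : l ≠ i := (Finset.mem_erase.mp ((Finset.mem_erase.mp hl).2)).1
      have hlj : l ≠ j := (Finset.mem_erase.mp hl).1
      rw [hsplit_j, Finset.sum_insert hiD]
      congr 1
      rw [Finset.sum_eq_single_of_mem l hl]
      intro m hm hml
      have hmi : m ≠ i := (Finset.mem_erase.mp ((Finset.mem_erase.mp hm).2)).1
      have hmj : m ≠ j := (Finset.mem_erase.mp hm).1
      simp only [hF]
      rw [permSlot_mul_comm_disj N n hij (Ne.symm hmi) hlj (Ne.symm hml), sub_self, smul_zero]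
    have hinner_j : ∑ m ∈ Finset.univ.erase j, F j m = ∑ m ∈ D, F j m := by
      rw [hsplit_j, Finset.sum_insert hiD]
      have : F j i = 0 := by
        simp only [hF]; rw [permSlot_comm N n j i, sub_self, smul_zero]
      rw [this, zero_add]
    -- per-index vanishing
    have key : ∀ t ∈ D, F j t + (F t i + F t t) = 0 := by
      intro t ht
      have hti : t ≠ i := (Finset.mem_erase.mp ((Finset.mem_erase.mp ht).2)).1
      have htj : t ≠ j := (Finset.mem_erase.mp ht).1
      have hxij : x i ≠ x j := fun h => hij (hx h)
      have hxit : x i ≠ x t := fun h => (Ne.symm hti) (hx h)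
      have hxjt : x j ≠ x t := fun h => (Ne.symm htj) (hx h)
      simp only [hF]
      rw [permSlot_comm N n j i]
      simp only [permSlot_eq, permGen_mul]
      rw [swap_tr1 hij (Ne.symm hti) (Ne.symm htj), swap_tr1' hij (Ne.symm hti) (Ne.symm htj),
        swap_tr2 hij (Ne.symm hti) (Ne.symm htj), swap_tr2' hij (Ne.symm hti) (Ne.symm htj)]
      set A := permGen N n ((Equiv.swap i j).trans (Equiv.swap j t)) with hA
      set B := permGen N n ((Equiv.swap j t).trans (Equiv.swap i j)) with hB
      have hco := coef_identity hxij hxit hxjt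
      have : ((x i - x j)⁻¹ * (x j - x t)⁻¹) • (A - B)
            + (((x i - x t)⁻¹ * (x j - x i)⁻¹) • (A - B)
              + ((x i - x t)⁻¹ * (x j - x t)⁻¹) • (B - A))
          = ((x i - x j)⁻¹ * (x j - x t)⁻¹ + (x i - x t)⁻¹ * (x j - x i)⁻¹
              - (x i - x t)⁻¹ * (x j - x t)⁻¹) • (A - B) := by
        module
      rw [this, hco, zero_smul]
    -- put everything together
    rw [hsplit_i, Finset.sum_insert hjD, hinner_j,
      Finset.sum_congr rfl hinner, Finset.sum_add_distrib, ← add_assoc,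
      ← Finset.sum_add_distrib, ← Finset.sum_add_distrib]
    rw [show (∑ t ∈ D, (F j t + F t i + F t t)) = ∑ t ∈ D, (F j t + (F t i + F t t)) from
      Finset.sum_congr rfl fun t _ => by rw [add_assoc]]
    rw [Finset.sum_congr rfl key, Finset.sum_const_zero]
  rw [e1, e2, e3, add_zero, add_zero]
end
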